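/- Fix ρ ∈ (0,1) and, for h ∈ (0,1), define f_h(v) = v − 1 + (v+1)·exp(−2v·h^{−ρ}) for v > 0. Then: (i) f_h(v) > 0 for all v ≥ 1 and all h ∈ (0,1); and (ii) there exists h₀ ∈ (0,1) such that for all h ∈ (0,h₀), f_h(v) < 0 for all v ∈ (0, 1 − h^{ρ/2}], and f_h'(v) > 0 for all v ∈ (1 − h^{ρ/2}, 1). -/
import Mathlib


open Real Set

noncomputable section

/-- The secular function whose zeros `w > 0` correspond, via `λ = -w²`, to the negative
eigenvalues of the 1D Laplacian on `(0, h^{-ρ})` with Robin condition `u'(0) = -u(0)`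
and Dirichlet condition `u(h^{-ρ}) = 0`. -/
def secular (ρ h v : ℝ) : ℝ := v - 1 + (v + 1) * Real.exp (-2 * v * h ^ (-ρ))

lemma secular_hasDerivAt (ρ h v : ℝ) :
    HasDerivAt (secular ρ h)
      (1 + (1 - 2 * h ^ (-ρ) * (v + 1)) * Real.exp (-2 * v * h ^ (-ρ))) v := by
  have h1 : HasDerivAt (fun x : ℝ => -2 * x * h ^ (-ρ)) (-2 * h ^ (-ρ)) v := by
    simpa using ((hasDerivAt_id v).const_mul (-2)).mul_const (h ^ (-ρ))
  have h2 := h1.exp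
  have h3 : HasDerivAt (fun x : ℝ => x + 1) 1 v := (hasDerivAt_id v).add_const 1
  have h4 := h3.mul h2
  have h5 : HasDerivAt (fun x : ℝ => x - 1) 1 v := (hasDerivAt_id v).sub_const 1
  have h6 := h5.add h4
  have hval : 1 + (1 - 2 * h ^ (-ρ) * (v + 1)) * Real.exp (-2 * v * h ^ (-ρ))
      = 1 + (1 * Real.exp (-2 * v * h ^ (-ρ))
        + (v + 1) * (Real.exp (-2 * v * h ^ (-ρ)) * (-2 * h ^ (-ρ)))) := by ring
  rw [hval]
  exact h6

theorem secular_sign_analysis (ρ : ℝ) (hρ : ρ ∈ Set.Ioo (0 : ℝ) 1) :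
    (∀ h ∈ Set.Ioo (0 : ℝ) 1, ∀ v : ℝ, 1 ≤ v → 0 < secular ρ h v) ∧
    (∃ h₀ ∈ Set.Ioo (0 : ℝ) 1, ∀ h ∈ Set.Ioo (0 : ℝ) h₀,
      (∀ v : ℝ, 0 < v → v ≤ 1 - h ^ (ρ / 2) → secular ρ h v < 0) ∧
      (∀ v ∈ Set.Ioo (1 - h ^ (ρ / 2)) 1, 0 < deriv (secular ρ h) v)) := by
  obtain ⟨hρ0, hρ1⟩ := hρ
  constructor
  · intro h hh v hv
    have h1 : 0 < (v + 1) * Real.exp (-2 * v * h ^ (-ρ)) :=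
      mul_pos (by linarith) (Real.exp_pos _)
    unfold secular
    linarith
  · refine ⟨(16 : ℝ)⁻¹ ^ ρ⁻¹, ⟨Real.rpow_pos_of_pos (by norm_num) _,
      Real.rpow_lt_one (by norm_num) (by norm_num) (by positivity)⟩, ?_⟩
    rintro h ⟨hh0, hh1⟩
    -- basic facts
    have hhlt1 : h < 1 := lt_of_lt_of_le hh1 (le_of_lt
      (Real.rpow_lt_one (by norm_num) (by norm_num) (by positivity)))
    have hρpow_pos : (0:ℝ) < h ^ ρ := Real.rpow_pos_of_pos hh0 _
    have hρ2pow_pos : (0:ℝ) < h ^ (ρ/2) := Real.rpow_pos_of_pos hh0 _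
    have hkey16 : h ^ ρ < 16⁻¹ := by
      have h1 : h ^ ρ < ((16:ℝ)⁻¹ ^ ρ⁻¹) ^ ρ := Real.rpow_lt_rpow hh0.le hh1 hρ0
      rwa [← Real.rpow_mul (by norm_num : (0:ℝ) ≤ 16⁻¹),
        inv_mul_cancel₀ hρ0.ne', Real.rpow_one] at h1
    have hkey4 : h ^ (ρ/2) < 4⁻¹ := by
      have h1 : h ^ (ρ/2) = (h ^ ρ) ^ ((2:ℝ)⁻¹) := by
        rw [← Real.rpow_mul hh0.le]; ring_nf
      have h2 : (h ^ ρ) ^ ((2:ℝ)⁻¹) < ((16:ℝ)⁻¹) ^ ((2:ℝ)⁻¹) :=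
        Real.rpow_lt_rpow hρpow_pos.le hkey16 (by norm_num)
      have h3 : ((16:ℝ)⁻¹) ^ ((2:ℝ)⁻¹) = 4⁻¹ := by
        rw [show ((2:ℝ))⁻¹ = 1/2 by norm_num, ← Real.sqrt_eq_rpow,
          show (16:ℝ)⁻¹ = (4⁻¹)^2 by norm_num, Real.sqrt_sq (by norm_num)]
      rw [h1]; rw [h3] at h2; exact h2
    set T : ℝ := h ^ (-ρ) with hTdef
    have hTinv : T = (h ^ ρ)⁻¹ := Real.rpow_neg hh0.le ρ
    have hTpos : 0 < T := Real.rpow_pos_of_pos hh0 _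
    have hT16 : (16:ℝ) < T := by
      rw [hTinv, show (16:ℝ) = (16⁻¹:ℝ)⁻¹ by norm_num]
      exact inv_strictAnti₀ hρpow_pos hkey16
    have hTmul : h ^ ρ * T = 1 := by
      rw [hTinv]; field_simp
    constructor
    · -- negativity on (0, 1 - h^{ρ/2}]
      intro v hv0 hvle
      have hcmp : h ^ ρ < h ^ (ρ/2) :=
        Real.rpow_lt_rpow_of_exponent_gt hh0 hhlt1 (by linarith)
      have hv1 : v < 1 := by linarith
      have key : 1 < T * (1 - v) := by
        have h1 : h ^ ρ < 1 - v := by linarith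
        calc 1 = T * (h ^ ρ) := by rw [mul_comm]; exact hTmul.symm
        _ < T * (1 - v) := by exact mul_lt_mul_of_pos_left h1 hTpos
      set E := Real.exp (-2 * v * T) with hEdef
      set P := Real.exp (2 * v * T) with hPdef
      have hEpos : 0 < E := Real.exp_pos _
      have hEP : E * P = 1 := by
        rw [hEdef, hPdef, ← Real.exp_add, show -2*v*T + 2*v*T = 0 by ring, Real.exp_zero]
      have hP : 1 + 2 * v * T < P := by
        have := Real.add_one_lt_exp (show 2*v*T ≠ 0 by positivity)
        rw [hPdef]; linarith
      have step1 : (1 + v) < (1 - v) * P := by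
        nlinarith [mul_pos hv0 (sub_pos.mpr key),
          mul_pos (sub_pos.mpr hv1) (sub_pos.mpr hP)]
      have step2 : (1 + v) * E < 1 - v := by
        have h4 := mul_lt_mul_of_pos_right step1 hEpos
        have h5 : (1 - v) * P * E = 1 - v := by
          rw [mul_assoc, mul_comm P E, hEP, mul_one]
        rw [h5] at h4; exact h4
      unfold secular
      rw [← hTdef, ← hEdef]
      linarith
    · -- positivity of the derivative on (1 - h^{ρ/2}, 1)
      rintro v ⟨hvlo, hvhi⟩
      rw [(secular_hasDerivAt ρ h v).deriv, ← hTdef]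
      have hv34 : (3:ℝ)/4 < v := by
        have : (1:ℝ) - 4⁻¹ < 1 - h ^ (ρ/2) := by linarith
        linarith
      set E := Real.exp (-2 * v * T) with hEdef
      set X := Real.exp (v * T) with hXdef
      have hEpos : 0 < E := Real.exp_pos _
      have hXpos : 0 < X := Real.exp_pos _
      have hX : v * T + 1 ≤ X := Real.add_one_le_exp _
      have hEXX : E * X * X = 1 := by
        rw [hEdef, hXdef, ← Real.exp_add, ← Real.exp_add,
          show -2*v*T + v*T + v*T = 0 by ring, Real.exp_zero]
      have hvT : (12:ℝ) < v * T := by nlinarith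
      have hcmp2 : 2 * T * (v + 1) - 1 < (v * T + 1) ^ 2 := by
        nlinarith [mul_pos hTpos hTpos, sq_nonneg (v*T)]
      have hEb : E * (v * T + 1) ^ 2 ≤ 1 := by
        have h1 : (v*T+1)^2 ≤ X^2 := by nlinarith
        calc E * (v*T+1)^2 ≤ E * X^2 := by nlinarith
        _ = 1 := by rw [sq]; rw [← mul_assoc]; exact hEXX
      have hfin : (2 * T * (v + 1) - 1) * E < 1 := by
        calc (2 * T * (v + 1) - 1) * E < (v*T+1)^2 * E :=
              mul_lt_mul_of_pos_right hcmp2 hEpos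
        _ ≤ 1 := by rw [mul_comm]; exact hEb
      have hring : (1 - 2 * T * (v + 1)) * E = -((2 * T * (v + 1) - 1) * E) := by ring
      linarith [hfin, hring]
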